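/- Identify T*gl(n,ℝ) with pairs (A,B) of n×n real matrices and let {·,·}_1 be the Lie–Poisson bracket of the semidirect product Lie algebra gl(n)⋉gl(n), defined via matrix gradients. For k ≥ 1 set J_k(A,B) = trace(A^{k−1}·B). Then for all k,ℓ ≥ 1 and all (A,B): {J_k, J_ℓ}_1(A,B) = (ℓ−k)·J_{k+ℓ−1}(A,B), where the right-hand side means the (ℓ−k)-fold integer multiple of J_{k+ℓ−1}(A,B). -/

import Mathlib

open Matrix

attribute [local instance] Matrix.normedAddCommGroup Matrix.normedSpace

variable {n : ℕ}

/-- The continuous linear functional `(Ȧ, Ḃ) ↦ trace(GA·Ȧ) + trace(GB·Ḃ)` on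
`T*gl(n,ℝ) = gl(n,ℝ) × gl(n,ℝ)`. -/
noncomputable def tracePairing (GA GB : Matrix (Fin n) (Fin n) ℝ) :
    Matrix (Fin n) (Fin n) ℝ × Matrix (Fin n) (Fin n) ℝ →L[ℝ] ℝ :=
  LinearMap.toContinuousLinearMap
    { toFun := fun P => (GA * P.1).trace + (GB * P.2).trace
      map_add' := by
        intro P Q
        simp [Matrix.mul_add, Matrix.trace_add]
        ring
      map_smul' := by
        intro c P
        simp [Matrix.mul_smul, Matrix.trace_smul]
        ring }

/-- `F` has matrix gradients `(GA, GB)` at `(A,B)`: the Fréchet derivative of `F`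
at `(A,B)` is `(Ȧ, Ḃ) ↦ trace(GA·Ȧ) + trace(GB·Ḃ)`. -/
def HasMatrixGradAt (F : Matrix (Fin n) (Fin n) ℝ × Matrix (Fin n) (Fin n) ℝ → ℝ)
    (P : Matrix (Fin n) (Fin n) ℝ × Matrix (Fin n) (Fin n) ℝ)
    (GA GB : Matrix (Fin n) (Fin n) ℝ) : Prop :=
  HasFDerivAt F (tracePairing GA GB) P

/-- `I_k(A,B) = (1/k)·trace(Aᵏ)`. -/
noncomputable def Ifun (n k : ℕ) (P : Matrix (Fin n) (Fin n) ℝ × Matrix (Fin n) (Fin n) ℝ) : ℝ :=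
  (1 / (k : ℝ)) * (P.1 ^ k).trace

/-- `J_k(A,B) = trace(A^{k-1}·B)`. -/
noncomputable def Jfun (n k : ℕ) (P : Matrix (Fin n) (Fin n) ℝ × Matrix (Fin n) (Fin n) ℝ) : ℝ :=
  (P.1 ^ (k - 1) * P.2).trace


/-!
The gradients of `J_{m+1}` at `(A, B)` are `∇_A = ∑_{i<m} A^(m-1-i) B A^i` and `∇_B = A^m`,
read off from the product rule and cyclicity of the trace. In `{J_{m+1}, J_{p+1}}_1` the
`B`-term vanishes because `A^m` and `A^p` commute, while cyclicity collapses each of the `p`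
summands of `trace(A^(m+1) ∇_A J_{p+1})` to `trace(A^(m+p) B)`; hence the bracket is
`(p - m) · J_{m+p+1}`.
-/

open scoped RightActions

noncomputable def Matrix.traceCLM {ι : Type*} [Fintype ι] : Matrix ι ι ℝ →L[ℝ] ℝ :=
  LinearMap.toContinuousLinearMap (Matrix.traceLinearMap ι ℝ ℝ)

@[simp]
theorem Matrix.traceCLM_apply {ι : Type*} [Fintype ι] (M : Matrix ι ι ℝ) :
    Matrix.traceCLM M = M.trace := rfl

section MatrixCalculus

variable {ι E : Type*} [Fintype ι] [DecidableEq ι] [NormedAddCommGroup E] [NormedSpace ℝ E]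
  {f g : E → Matrix ι ι ℝ} {f' g' : E →L[ℝ] Matrix ι ι ℝ} {x : E}

theorem HasFDerivAt.matrix_mul (hf : HasFDerivAt f f' x) (hg : HasFDerivAt g g' x) :
    HasFDerivAt (fun y => f y * g y) (f x •> g' + f' <• g x) x :=
  ((LinearMap.mul ℝ (Matrix ι ι ℝ)).toContinuousBilinearMap.hasFDerivAt_of_bilinear
    hf hg).congr_fderiv (by ext1 v; rfl)

theorem HasFDerivAt.matrix_pow (hf : HasFDerivAt f f' x) (m : ℕ) :
    HasFDerivAt (fun y => f y ^ m)
      (∑ i ∈ Finset.range m, f x ^ i •> f' <• f x ^ (m - 1 - i)) x := by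
  induction m with
  | zero => simpa using hasFDerivAt_const (1 : Matrix ι ι ℝ) x
  | succ m ih =>
    simp_rw [pow_succ]
    refine (ih.matrix_mul hf).congr_fderiv (ContinuousLinearMap.ext fun v => ?_)
    simp only [_root_.add_apply, _root_.smul_apply, smul_eq_mul, _root_.sum_apply,
      MulOpposite.smul_eq_mul_unop, MulOpposite.unop_op, add_tsub_cancel_right,
      Finset.sum_range_succ, tsub_self, pow_zero, mul_one, Finset.sum_mul]
    rw [add_comm]
    congr 1
    refine Finset.sum_congr rfl fun i hi => ?_
    have hi : i < m := Finset.mem_range.1 hi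
    rw [mul_assoc, ← pow_succ, show m - 1 - i + 1 = m - i by omega]

end MatrixCalculus

theorem Matrix.trace_pow_succ_mul_sum {ι R : Type*} [Fintype ι] [DecidableEq ι] [CommRing R]
    (A B : Matrix ι ι R) (q r : ℕ) :
    (A ^ (q + 1) * ∑ i ∈ Finset.range r, A ^ (r - 1 - i) * B * A ^ i).trace
      = r • (A ^ (q + r) * B).trace := by
  rw [Finset.mul_sum, Matrix.trace_sum,
    Finset.sum_congr rfl (g := fun _ => (A ^ (q + r) * B).trace), Finset.sum_const,
    Finset.card_range]
  intro i hi
  rw [← mul_assoc, ← mul_assoc, Matrix.trace_mul_comm, ← mul_assoc, ← pow_add, ← pow_add,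
    show i + (q + 1 + (r - 1 - i)) = q + r by grind]

@[simp]
theorem tracePairing_apply (GA GB : Matrix (Fin n) (Fin n) ℝ)
    (P : Matrix (Fin n) (Fin n) ℝ × Matrix (Fin n) (Fin n) ℝ) :
    tracePairing GA GB P = (GA * P.1).trace + (GB * P.2).trace := rfl

theorem HasMatrixGradAt.unique {F : Matrix (Fin n) (Fin n) ℝ × Matrix (Fin n) (Fin n) ℝ → ℝ}
    {P : Matrix (Fin n) (Fin n) ℝ × Matrix (Fin n) (Fin n) ℝ}
    {GA GB GA' GB' : Matrix (Fin n) (Fin n) ℝ}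
    (h : HasMatrixGradAt F P GA GB) (h' : HasMatrixGradAt F P GA' GB') :
    GA = GA' ∧ GB = GB' := by
  have hpair (X Y) := DFunLike.congr_fun (HasFDerivAt.unique h h') (X, Y)
  simp only [tracePairing_apply] at hpair
  exact ⟨Matrix.ext_iff_trace_mul_right.2 fun X => by simpa using hpair X 0,
    Matrix.ext_iff_trace_mul_right.2 fun Y => by simpa using hpair 0 Y⟩

theorem hasMatrixGradAt_Jfun_succ (A B : Matrix (Fin n) (Fin n) ℝ) (m : ℕ) :
    HasMatrixGradAt (Jfun n (m + 1)) (A, B)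
      (∑ i ∈ Finset.range m, A ^ (m - 1 - i) * B * A ^ i) (A ^ m) := by
  have hprod := (hasFDerivAt_fst.matrix_pow m).matrix_mul (hasFDerivAt_snd (p := (A, B)))
  refine (Matrix.traceCLM.hasFDerivAt.comp (A, B) hprod).congr_fderiv
    (ContinuousLinearMap.ext fun P => ?_)
  -- Mismatched matrix topology instances block rewriting with the application lemmas of `∘L`
  -- and `tracePairing`; `show` restates the goal up to unfolding instead.
  show Matrix.traceCLM (_ : Matrix (Fin n) (Fin n) ℝ)
    = ((∑ i ∈ Finset.range m, A ^ (m - 1 - i) * B * A ^ i) * P.1).trace + (A ^ m * P.2).trace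
  simp only [ContinuousLinearMap.toLinearMap_add, ContinuousLinearMap.toLinearMap_smul,
    ContinuousLinearMap.toLinearMap_sum, LinearMap.add_apply, ContinuousLinearMap.coe_coe,
    LinearMap.smul_apply, LinearMap.coe_sum, LinearMap.coe_smul, Finset.sum_apply, Pi.smul_apply,
    MulOpposite.smul_eq_mul_unop, MulOpposite.unop_op, Finset.sum_mul, Matrix.traceCLM_apply,
    Matrix.trace_add, Matrix.trace_sum]
  show (A ^ m * P.2).trace + ∑ i ∈ Finset.range m, (A ^ i * P.1 * A ^ (m - 1 - i) * B).trace = _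
  rw [add_comm]
  congr 1
  refine Finset.sum_congr rfl fun i _ => ?_
  rw [Matrix.trace_mul_cycle, ← mul_assoc, Matrix.trace_mul_cycle]
  simp only [mul_assoc]

theorem lie_poisson_brackets_JJ_general (k ℓ : ℕ) (hk : 1 ≤ k) (hl : 1 ≤ ℓ)
    (A B JkA JkB JlA JlB : Matrix (Fin n) (Fin n) ℝ)
    (hJk : HasMatrixGradAt (Jfun n k) (A, B) JkA JkB)
    (hJl : HasMatrixGradAt (Jfun n ℓ) (A, B) JlA JlB) :
    (A * (JkB * JlA - JlB * JkA)).trace + (B * (JkB * JlB - JlB * JkB)).trace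
      = ((ℓ : ℤ) - (k : ℤ)) • Jfun n (k + ℓ - 1) (A, B) := by
  obtain ⟨m, rfl⟩ : ∃ m, k = m + 1 := ⟨k - 1, by omega⟩
  obtain ⟨p, rfl⟩ : ∃ p, ℓ = p + 1 := ⟨ℓ - 1, by omega⟩
  obtain ⟨rfl, rfl⟩ := (hasMatrixGradAt_Jfun_succ A B m).unique hJk
  obtain ⟨rfl, rfl⟩ := (hasMatrixGradAt_Jfun_succ A B p).unique hJl
  rw [(Commute.pow_pow_self A m p).eq, sub_self, Matrix.mul_zero, Matrix.trace_zero, add_zero,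
    Matrix.mul_sub, ← Matrix.mul_assoc, ← Matrix.mul_assoc, ← pow_succ', ← pow_succ',
    Matrix.trace_sub, Matrix.trace_pow_succ_mul_sum, Matrix.trace_pow_succ_mul_sum,
    show m + 1 + (p + 1) - 1 = m + p + 1 by omega, Jfun, Nat.add_sub_cancel, add_comm p m]
  push_cast [zsmul_eq_mul, nsmul_eq_mul]
  ring

/-- Lie–Poisson bracket (for the semidirect product `gl(n)⋉gl(n)`) of the invariants
`J_k` on `T*gl(n,ℝ)`: `{J_k, J_ℓ}₁ = (ℓ−k)·J_{k+ℓ−1}`, where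
`{F,G}₁ = trace(A·(∇_B F·∇_A G − ∇_B G·∇_A F)) + trace(B·(∇_B F·∇_B G − ∇_B G·∇_B F))`. -/
theorem lie_poisson_brackets_JJ (hn : 1 ≤ n) (k ℓ : ℕ) (hk : 1 ≤ k) (hl : 1 ≤ ℓ)
    (A B JkA JkB JlA JlB : Matrix (Fin n) (Fin n) ℝ)
    (hJk : HasMatrixGradAt (Jfun n k) (A, B) JkA JkB)
    (hJl : HasMatrixGradAt (Jfun n ℓ) (A, B) JlA JlB) :
    (A * (JkB * JlA - JlB * JkA)).trace + (B * (JkB * JlB - JlB * JkB)).trace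
      = ((ℓ : ℤ) - (k : ℤ)) • Jfun n (k + ℓ - 1) (A, B) :=
  lie_poisson_brackets_JJ_general k ℓ hk hl A B JkA JkB JlA JlB hJk hJl
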